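/- arXiv:math/0201162 — 5 statements merged into one kernel-verified Lean document; each statement's English description precedes it below -/
import Mathlib

section
/- Let S be a nondegenerate integral lattice and λ the exponent of the finite abelian group S*/S, where S* = Hom(S,ℤ) is the dual lattice embedded in S ⊗ ℚ. If α = m·α₀ is a root of S (i.e. (α,α) > 0 and (α,α) | 2(α,x) for all x ∈ S) with α₀ ∈ S primitive and m ∈ ℕ, then m·(α₀,α₀) divides 2λ. In particular (α,α) = m²(α₀,α₀) ≤ (2λ)². -/
/-- Let `S` be a (full) nondegenerate integral lattice in a rational
quadratic space `V`, with dual lattice `S* = {x ∈ V : B(x,S) ⊆ ℤ}` and `lam` the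
exponent of the finite abelian group `S*/S`. If `α = m • α₀` is a root of `S`
(`(α,α) > 0` and `(α,α) ∣ 2(α,x)` for all `x ∈ S`) with `α₀ ∈ S` primitive and
`m ∈ ℕ`, then `m·(α₀,α₀)` divides `2·lam`; in particular
`(α,α) = m²(α₀,α₀) ≤ (2·lam)²`. -/
theorem root_norm_divides_twice_exponent
    {V : Type*} [AddCommGroup V] [Module ℚ V] [FiniteDimensional ℚ V]
    (B : V →ₗ[ℚ] V →ₗ[ℚ] ℚ)
    (hsymm : ∀ x y, B x y = B y x)
    (hnondeg : ∀ x, (∀ y, B x y = 0) → x = 0)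
    (S : Submodule ℤ V)
    (hfull : Submodule.span ℚ (S : Set V) = ⊤)
    (hint : ∀ x ∈ S, ∀ y ∈ S, ∃ n : ℤ, B x y = (n : ℚ))
    (lam : ℕ) (hlam_pos : 0 < lam)
    -- `lam` kills the discriminant group `S*/S` ...
    (hlam : ∀ x : V, (∀ s ∈ S, ∃ n : ℤ, B x s = (n : ℚ)) → (lam : ℚ) • x ∈ S)
    -- ... and is minimal with this property (it is the exponent of `S*/S`)
    (hlam_min : ∀ μ : ℕ, 0 < μ →
      (∀ x : V, (∀ s ∈ S, ∃ n : ℤ, B x s = (n : ℚ)) → (μ : ℚ) • x ∈ S) → lam ≤ μ)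
    (α₀ : V) (hα₀S : α₀ ∈ S)
    (hα₀prim : ∀ c : ℚ, c • α₀ ∈ S → ∃ n : ℤ, (n : ℚ) = c)
    (m : ℕ) (α : V) (hα : α = (m : ℚ) • α₀)
    (hroot_pos : 0 < B α α)
    (hroot_div : ∀ x ∈ S, ∃ k : ℤ, 2 * B α x = (k : ℚ) * B α α) :
    (∃ k : ℤ, (2 * lam : ℚ) = (k : ℚ) * ((m : ℚ) * B α₀ α₀)) ∧
    B α α = (m : ℚ) ^ 2 * B α₀ α₀ ∧
    B α α ≤ (2 * lam : ℚ) ^ 2 := by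
  have hαα : B α α = (m : ℚ) ^ 2 * B α₀ α₀ := by
    subst hα; simp [smul_eq_mul]; ring
  have hm : (0:ℚ) < m := by
    rcases Nat.eq_zero_or_pos m with h | h
    · subst h; rw [hαα] at hroot_pos; norm_num at hroot_pos
    · exact_mod_cast h
  have hB0 : 0 < B α₀ α₀ := by
    rw [hαα] at hroot_pos; nlinarith
  -- B(α₀,α₀) is a positive integer, hence ≥ 1
  obtain ⟨n₀, hn₀⟩ := hint α₀ hα₀S α₀ hα₀S
  have hB0one : (1:ℚ) ≤ B α₀ α₀ := by
    rw [hn₀] at hB0 ⊢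
    exact_mod_cast hB0
  have hmB0 : (0:ℚ) < (m:ℚ) * B α₀ α₀ := by positivity
  -- the dual vector w
  set w : V := (2 / ((m:ℚ) * B α₀ α₀)) • α₀ with hw
  have hwdual : ∀ s ∈ S, ∃ n : ℤ, B w s = (n : ℚ) := by
    intro s hs
    obtain ⟨k, hk⟩ := hroot_div s hs
    refine ⟨k, ?_⟩
    have hαs : B α s = (m:ℚ) * B α₀ s := by subst hα; simp [smul_eq_mul]
    rw [hαα, hαs] at hk
    have : B w s = (2 / ((m:ℚ) * B α₀ α₀)) * B α₀ s := by simp [hw, smul_eq_mul]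
    rw [this]
    field_simp
    nlinarith [hk]
  have hmem := hlam w hwdual
  have : ((lam : ℚ) * (2 / ((m:ℚ) * B α₀ α₀))) • α₀ ∈ S := by
    rwa [hw, smul_smul] at hmem
  obtain ⟨k, hk⟩ := hα₀prim _ this
  have hlamQ : (0:ℚ) < lam := by exact_mod_cast hlam_pos
  have hkey : (2 * lam : ℚ) = (k : ℚ) * ((m : ℚ) * B α₀ α₀) := by
    have hne : ((m:ℚ) * B α₀ α₀) ≠ 0 := ne_of_gt hmB0
    field_simp at hk
    linarith [hk]
  refine ⟨⟨k, hkey⟩, hαα, ?_⟩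
  have hk1 : (1:ℚ) ≤ (k:ℚ) := by
    have hkpos : (0:ℚ) < (k:ℚ) := by nlinarith
    exact_mod_cast hkpos
  have hle : (m:ℚ) * B α₀ α₀ ≤ 2 * lam := by nlinarith
  rw [hαα]
  nlinarith [hle, hB0one, hm]
end

section
/- Let S be an integral lattice of signature (n,1) (hyperbolic), and let ρ ∈ S ⊗ ℚ satisfy (ρ,ρ) < 0. Then for every real constant K > 0, the set { a ∈ S : 0 < (a,a) < K and −K/2 < (ρ,a) < 0 } is finite. -/
/-!
Write `(·,·)` for the real extension of the form. Since `(ρ,ρ) < 0` and the form has signature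
`(n,1)`, it is positive definite on `ρ^⊥`; hence the majorant `2(ρ,x)² - (ρ,ρ)(x,x)` is a
positive definite quadratic form, and so bounded below by `m‖x‖²` for some `m > 0`. On the vectors
in question it is bounded by `K²/2 - (ρ,ρ)K`, so they lie in a ball, which contains only finitely
many integral points.
-/

open Bornology

section Coercive

variable {E : Type*} [NormedAddCommGroup E] [NormedSpace ℝ E] [ProperSpace E] [Nontrivial E]
  {f : E → ℝ}

theorem exists_pos_mul_norm_sq_le (hf : Continuous f)
    (hsmul : ∀ (c : ℝ) x, f (c • x) = c ^ 2 * f x) (hpos : ∀ x ≠ 0, 0 < f x) :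
    ∃ m > 0, ∀ x, m * ‖x‖ ^ 2 ≤ f x := by
  obtain ⟨z, hz, hmin⟩ := (isCompact_sphere (0 : E) 1).exists_isMinOn
    (NormedSpace.sphere_nonempty.2 zero_le_one) hf.continuousOn
  refine ⟨f z, hpos z (Metric.ne_of_mem_sphere hz one_ne_zero), fun x => ?_⟩
  rcases eq_or_ne x 0 with rfl | hx
  · simpa using (hsmul 0 0).ge
  have hnx : ‖x‖ ≠ 0 := norm_ne_zero_iff.2 hx
  have hu : ‖x‖⁻¹ • x ∈ Metric.sphere (0 : E) 1 := by
    rw [mem_sphere_zero_iff_norm, norm_smul, norm_inv, norm_norm, inv_mul_cancel₀ hnx]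
  calc f z * ‖x‖ ^ 2 ≤ f (‖x‖⁻¹ • x) * ‖x‖ ^ 2 := by gcongr; exact hmin hu
    _ = f x := by
      rw [hsmul, inv_pow, mul_comm, ← mul_assoc, mul_inv_cancel₀ (by positivity), one_mul]

theorem isBounded_setOf_le (hf : Continuous f) (hsmul : ∀ (c : ℝ) x, f (c • x) = c ^ 2 * f x)
    (hpos : ∀ x ≠ 0, 0 < f x) (C : ℝ) : IsBounded {x | f x ≤ C} := by
  obtain ⟨m, hm, hle⟩ := exists_pos_mul_norm_sq_le hf hsmul hpos
  refine (Metric.isBounded_closedBall (x := 0) (r := √(C / m))).subset fun x hx => ?_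
  rw [mem_closedBall_zero_iff]
  apply Real.le_sqrt_of_sq_le
  rw [le_div_iff₀ hm]
  linarith [hle x, hx.out]

end Coercive

namespace LinearMap.BilinForm

section Basis

variable {ι E : Type*} [Fintype ι] [AddCommGroup E] [Module ℝ E] {B : LinearMap.BilinForm ℝ E}
  {e : Module.Basis ι ℝ E}

theorem apply_eq_sum_of_iIsOrtho (he : B.iIsOrtho e) (x y : E) :
    B x y = ∑ i, e.repr x i * e.repr y i * B (e i) (e i) := by
  conv_lhs => rw [← e.sum_repr x, ← e.sum_repr y]
  simp only [map_sum, map_smul, LinearMap.sum_apply, LinearMap.smul_apply, smul_eq_mul]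
  refine Finset.sum_congr rfl fun i _ => ?_
  rw [Finset.sum_eq_single i (fun j _ hji => by rw [he hji, mul_zero]) (by simp)]
  ring

theorem isSymm_of_iIsOrtho (he : B.iIsOrtho e) : B.IsSymm :=
  ⟨fun x y => by
    rw [apply_eq_sum_of_iIsOrtho he, apply_eq_sum_of_iIsOrtho he]
    simp only [mul_comm (e.repr x _)]⟩

variable {i₀ : ι}

theorem pos_of_repr_eq_zero (he : B.iIsOrtho e) (hpos : ∀ i ≠ i₀, 0 < B (e i) (e i)) {v : E}
    (hv : e.repr v i₀ = 0) (hv0 : v ≠ 0) : 0 < B v v := by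
  obtain ⟨j, hj⟩ : ∃ j, e.repr v j ≠ 0 := by
    by_contra! h
    exact hv0 (e.repr.injective (Finsupp.ext fun j => by simp [h j]))
  have hji : j ≠ i₀ := by rintro rfl; exact hj hv
  rw [apply_eq_sum_of_iIsOrtho he]
  refine Finset.sum_pos' (fun i _ => ?_) ⟨j, Finset.mem_univ j, ?_⟩
  · rcases eq_or_ne i i₀ with rfl | hi
    · simp [hv]
    · exact mul_nonneg (mul_self_nonneg _) (hpos i hi).le
  · exact mul_pos (mul_self_pos.2 hj) (hpos j hji)

theorem pos_of_apply_eq_zero_of_neg (he : B.iIsOrtho e) (hpos : ∀ i ≠ i₀, 0 < B (e i) (e i))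
    {p w : E} (hp : B p p < 0) (hpw : B p w = 0) (hw : w ≠ 0) : 0 < B w w := by
  by_contra! hww
  set a := e.repr w i₀
  set b := e.repr p i₀
  rcases eq_or_ne a 0 with ha | ha
  · exact not_lt_of_ge hww (pos_of_repr_eq_zero he hpos ha hw)
  -- `v` has no `i₀`-coordinate, yet lies in the plane spanned by `p` and `w`, on which `B ≤ 0`
  set v := a • p - b • w
  have hv : e.repr v i₀ = 0 := by simp only [v, map_sub, map_smul]; simp [a, b]; ring
  have hwp : B w p = 0 := (isSymm_of_iIsOrtho he).eq w p ▸ hpw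
  have hvv : B v v = a ^ 2 * B p p + b ^ 2 * B w w := by
    simp only [v, map_sub, map_smul, LinearMap.sub_apply, LinearMap.smul_apply, smul_eq_mul,
      hpw, hwp]
    ring
  have hvv_neg : B v v < 0 := by
    rw [hvv]
    nlinarith [mul_neg_of_pos_of_neg (pow_pos (abs_pos.2 ha) 2) hp, sq_abs a,
      mul_nonpos_of_nonneg_of_nonpos (sq_nonneg b) hww]
  have hv0 : v ≠ 0 := by rintro hv0; simp [hv0] at hvv_neg
  exact not_lt_of_gt hvv_neg (pos_of_repr_eq_zero he hpos hv hv0)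

end Basis

section Majorant

variable {E : Type*} [AddCommGroup E] [Module ℝ E]

/-- `|B p p|` times the Siegel majorant `B x x + 2 (B p x)² / |B p p|` of `B` attached to a
vector `p` with `B p p < 0`. -/
def majorant (B : LinearMap.BilinForm ℝ E) (p x : E) : ℝ :=
  2 * B p x ^ 2 - B p p * B x x

variable {B : LinearMap.BilinForm ℝ E} {p : E}

theorem majorant_smul (c : ℝ) (x : E) : B.majorant p (c • x) = c ^ 2 * B.majorant p x := by
  simp only [majorant, map_smul, LinearMap.smul_apply, smul_eq_mul]
  ring

theorem majorant_pos (hB : B.IsSymm) (hp : B p p < 0)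
    (hperp : ∀ w, B p w = 0 → w ≠ 0 → 0 < B w w) {x : E} (hx : x ≠ 0) :
    0 < B.majorant p x := by
  have hp0 : B p p ≠ 0 := hp.ne
  set t := B p x / B p p
  set w := x - t • p
  have hpw : B p w = 0 := by
    simp only [w, map_sub, map_smul, smul_eq_mul, t]
    field_simp
    ring
  have hwp : B w p = 0 := hB.eq w p ▸ hpw
  have hpx : B p x = t * B p p := by simp only [t]; field_simp
  have hxx : B x x = B w w + t ^ 2 * B p p := by
    have hx : x = w + t • p := by simp [w]
    rw [hx]
    simp only [map_add, map_smul, LinearMap.add_apply, LinearMap.smul_apply, smul_eq_mul, hpw,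
      hwp]
    ring
  have hmaj : B.majorant p x = t ^ 2 * B p p ^ 2 - B p p * B w w := by
    rw [majorant, hpx, hxx]
    ring
  rw [hmaj]
  rcases eq_or_ne w 0 with hw | hw
  · have ht : t ≠ 0 := by
      rintro ht
      exact hx (by simpa [w, ht] using hw)
    simp only [hw, map_zero, mul_zero, sub_zero]
    positivity
  · nlinarith [hperp w hpw hw, sq_nonneg (t * B p p)]

end Majorant

section Normed

variable {ι E : Type*} [Fintype ι] [NormedAddCommGroup E] [NormedSpace ℝ E]
  [FiniteDimensional ℝ E] {B : LinearMap.BilinForm ℝ E} {p : E}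

theorem continuous_majorant : Continuous (B.majorant p) := by
  have hB : Continuous fun x : E => B.toContinuousBilinearMap x x :=
    B.toContinuousBilinearMap.continuous.clm_apply continuous_id
  have hBp : Continuous fun x : E => B p x := (B p).continuous_of_finiteDimensional
  simp only [LinearMap.toContinuousBilinearMap_apply] at hB
  exact (continuous_const.mul (hBp.pow 2)).sub (continuous_const.mul hB)

theorem isBounded_setOf_apply_self_le_and_abs_apply_le {e : Module.Basis ι ℝ E}
    (he : B.iIsOrtho e) {i₀ : ι} (hpos : ∀ i ≠ i₀, 0 < B (e i) (e i)) (hp : B p p < 0)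
    (C D : ℝ) : IsBounded {x | B x x ≤ C ∧ |B p x| ≤ D} := by
  have : Nontrivial E := nontrivial_of_ne p 0 fun h => by simp [h] at hp
  refine (isBounded_setOf_le continuous_majorant majorant_smul
    (fun x hx => majorant_pos (isSymm_of_iIsOrtho he) hp
      (fun w => pos_of_apply_eq_zero_of_neg he hpos hp) hx) (2 * D ^ 2 - B p p * C)).subset ?_
  rintro x ⟨hC, hD⟩
  have hsq : B p x ^ 2 ≤ D ^ 2 := sq_le_sq' (abs_le.1 hD).1 (abs_le.1 hD).2
  show 2 * B p x ^ 2 - B p p * B x x ≤ 2 * D ^ 2 - B p p * C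
  nlinarith

end Normed

end LinearMap.BilinForm

theorem Bornology.IsBounded.finite_setOf_intCast_mem {ι : Type*} [Fintype ι] {s : Set (ι → ℝ)}
    (hs : IsBounded s) : {a : ι → ℤ | (fun i => (a i : ℝ)) ∈ s}.Finite := by
  obtain ⟨r, hr⟩ := hs.subset_closedBall 0
  refine (Set.Finite.pi fun _ => Set.finite_Icc (-⌈r⌉) ⌈r⌉).subset fun a ha i _ => ?_
  have hai : |(a i : ℝ)| ≤ r :=
    (norm_le_pi_norm (fun i => (a i : ℝ)) i).trans (mem_closedBall_zero_iff.1 (hr ha))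
  rw [← Int.cast_abs] at hai
  exact abs_le.1 (Int.cast_le.1 (hai.trans (Int.le_ceil r)))

theorem hyperbolic_lattice_bounded_root_set_finite_general
    (n : ℕ) (M : Matrix (Fin (n+1)) (Fin (n+1)) ℤ)
    (hsig : ∃ e : Module.Basis (Fin (n+1)) ℝ (Fin (n+1) → ℝ),
      (∀ i j, i ≠ j → ∑ k, ∑ l, e i k * (M k l : ℝ) * e j l = 0) ∧
      (∀ i, i ≠ Fin.last n → 0 < ∑ k, ∑ l, e i k * (M k l : ℝ) * e i l) ∧
      (∑ k, ∑ l, e (Fin.last n) k * (M k l : ℝ) * e (Fin.last n) l) < 0)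
    (ρ : Fin (n+1) → ℚ)
    (hρ : (∑ k, ∑ l, ρ k * (M k l : ℚ) * ρ l) < 0)
    (K : ℝ) :
    {a : Fin (n+1) → ℤ |
      0 < (∑ k, ∑ l, a k * M k l * a l) ∧
      ((∑ k, ∑ l, a k * M k l * a l : ℤ) : ℝ) < K ∧
      -K/2 < ((∑ k, ∑ l, ρ k * (M k l : ℚ) * (a l : ℚ) : ℚ) : ℝ) ∧
      ((∑ k, ∑ l, ρ k * (M k l : ℚ) * (a l : ℚ) : ℚ) : ℝ) < 0}.Finite := by
  obtain ⟨e, horth, hpos, -⟩ := hsig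
  set B : LinearMap.BilinForm ℝ (Fin (n+1) → ℝ) := Matrix.toLinearMap₂' ℝ (M.map (↑))
  have hB : ∀ x y, B x y = ∑ k, ∑ l, x k * (M k l : ℝ) * y l := fun x y => by
    simp only [B, Matrix.toLinearMap₂'_apply, Matrix.map_apply, smul_eq_mul]
    exact Finset.sum_congr rfl fun k _ => Finset.sum_congr rfl fun l _ => by ring
  set ρ' : Fin (n+1) → ℝ := fun i => ρ i
  have hρ' : B ρ' ρ' < 0 := by simp only [hB, ρ']; exact_mod_cast hρ
  have hbdd := B.isBounded_setOf_apply_self_le_and_abs_apply_le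
    (fun i j hij => (hB _ _).trans (horth i j hij)) (fun i hi => (hB _ _).symm ▸ hpos i hi) hρ'
    K (K / 2)
  refine hbdd.finite_setOf_intCast_mem.subset ?_
  rintro a ⟨-, haa, hlo, hhi⟩
  have hQ : B (fun i => (a i : ℝ)) (fun i => (a i : ℝ)) =
      ((∑ k, ∑ l, a k * M k l * a l : ℤ) : ℝ) := by
    rw [hB]; push_cast; rfl
  have hP : B ρ' (fun i => (a i : ℝ)) =
      ((∑ k, ∑ l, ρ k * (M k l : ℚ) * (a l : ℚ) : ℚ) : ℝ) := by
    rw [hB]; push_cast; rfl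
  exact ⟨hQ ▸ haa.le, abs_le.2 ⟨by linarith, by linarith⟩⟩

/-- For an integral lattice of signature (n,1) (a hyperbolic lattice,
realized by an integral symmetric Gram matrix `M` whose real form has an orthogonal
basis with `n` positive and one negative square), and `ρ ∈ S ⊗ ℚ` with `(ρ,ρ) < 0`,
for every real `K > 0` the set `{a ∈ S : 0 < (a,a) < K and −K/2 < (ρ,a) < 0}`
is finite. -/
theorem hyperbolic_lattice_bounded_root_set_finite
    (n : ℕ) (M : Matrix (Fin (n+1)) (Fin (n+1)) ℤ) (hsym : M.IsSymm)
    (hsig : ∃ e : Module.Basis (Fin (n+1)) ℝ (Fin (n+1) → ℝ),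
      (∀ i j, i ≠ j → ∑ k, ∑ l, e i k * (M k l : ℝ) * e j l = 0) ∧
      (∀ i, i ≠ Fin.last n → 0 < ∑ k, ∑ l, e i k * (M k l : ℝ) * e i l) ∧
      (∑ k, ∑ l, e (Fin.last n) k * (M k l : ℝ) * e (Fin.last n) l) < 0)
    (ρ : Fin (n+1) → ℚ)
    (hρ : (∑ k, ∑ l, ρ k * (M k l : ℚ) * ρ l) < 0)
    (K : ℝ) (hK : 0 < K) :
    {a : Fin (n+1) → ℤ |
      0 < (∑ k, ∑ l, a k * M k l * a l) ∧
      ((∑ k, ∑ l, a k * M k l * a l : ℤ) : ℝ) < K ∧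
      -K/2 < ((∑ k, ∑ l, ρ k * (M k l : ℚ) * (a l : ℚ) : ℚ) : ℝ) ∧
      ((∑ k, ∑ l, ρ k * (M k l : ℚ) * (a l : ℚ) : ℚ) : ℝ) < 0}.Finite :=
  hyperbolic_lattice_bounded_root_set_finite_general n M hsig ρ hρ K
end

section
/- Let m : ℕ≥1 → ℤ be any sequence of integers. Then there exists a unique sequence τ : ℕ≥1 → ℤ of integers such that, as formal power series in t, 1 − Σ_{k≥1} m(k) t^k = ∏_{n≥1} (1 − t^n)^{τ(n)}. -/
/-- The power series `1 − t^{n+1}` as a unit of `ℤ[[t]]`. -/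
noncomputable def oneSubXPowUnit (n : ℕ) : (PowerSeries ℤ)ˣ where
  val := 1 - PowerSeries.X ^ (n + 1)
  inv := PowerSeries.invOfUnit (1 - PowerSeries.X ^ (n + 1)) 1
  val_inv := PowerSeries.mul_invOfUnit _ _ (by simp)
  inv_val := by
    rw [mul_comm]
    exact PowerSeries.mul_invOfUnit _ _ (by simp)

/-!
Modulo `t^(k+1)` with `k ≥ 1`, `(1 - t^k)^a ≡ 1 - a t^k` for every `a : ℤ`, because the image of
`t^k` squares to zero. So multiplying the product of the factors with `n ≤ N` by
`(1 - t^(N+1))^τ(N+1)` fixes all coefficients below `t^(N+1)` and lowers that of `t^(N+1)` by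
`τ(N+1)`: matching `1 - Σ m(k) t^k` degree by degree determines each `τ(N+1)` in turn, as an
integer.
-/

open PowerSeries Finset

theorem Units.val_zpow_eq_one_add_zsmul {S : Type*} [CommRing S] {v : Sˣ} {ε : S}
    (hv : (v : S) = 1 + ε) (hε : ε * ε = 0) (a : ℤ) : ((v ^ a : Sˣ) : S) = 1 + a • ε := by
  have hv_inv : ((v⁻¹ : Sˣ) : S) = 1 - ε :=
    Units.inv_eq_of_mul_eq_one_right (by rw [hv]; linear_combination -hε)
  induction a using Int.induction_on with
  | zero => simp
  | succ i ih =>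
    rw [zpow_add_one, Units.val_mul, ih, hv]
    push_cast [zsmul_eq_mul]
    linear_combination (i : S) * hε
  | pred i ih =>
    rw [zpow_sub_one, Units.val_mul, ih, hv_inv]
    push_cast [zsmul_eq_mul]
    linear_combination (i : S) * hε

section

variable {R : Type*} [CommRing R]

theorem PowerSeries.X_pow_succ_dvd_val_zpow_sub {u : R⟦X⟧ˣ} {k : ℕ} (hk : 1 ≤ k)
    (hu : (u : R⟦X⟧) = 1 - X ^ k) (a : ℤ) :
    (X : R⟦X⟧) ^ (k + 1) ∣ ((u ^ a : R⟦X⟧ˣ) : R⟦X⟧) - (1 - a • X ^ k) := by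
  set π := Ideal.Quotient.mk (Ideal.span {(X : R⟦X⟧) ^ (k + 1)})
  have hπ : π (X ^ k * X ^ k) = 0 :=
    (Ideal.Quotient.eq_zero_iff_dvd _ _).2 (by rw [← pow_add]; exact pow_dvd_pow X (by omega))
  have key := Units.val_zpow_eq_one_add_zsmul (v := Units.map π.toMonoidHom u) (ε := -π (X ^ k))
    (by simp [hu, sub_eq_add_neg]) (by rw [← hπ, map_mul]; ring) a
  rw [← map_zpow, Units.coe_map] at key
  rw [← Ideal.mem_span_singleton, ← Ideal.Quotient.eq]
  simpa [sub_eq_add_neg] using key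

theorem PowerSeries.coeff_mul_val_zpow {u : R⟦X⟧ˣ} {k : ℕ} (hk : 1 ≤ k)
    (hu : (u : R⟦X⟧) = 1 - X ^ k) (g : R⟦X⟧) (a : ℤ) {n : ℕ} (hn : n ≤ k) :
    coeff n (g * ((u ^ a : R⟦X⟧ˣ) : R⟦X⟧)) =
      coeff n g - if n = k then a • constantCoeff g else 0 := by
  have hcongr : coeff n (g * ((u ^ a : R⟦X⟧ˣ) : R⟦X⟧)) = coeff n (g * (1 - a • X ^ k)) := by
    rw [← sub_eq_zero, ← map_sub, ← mul_sub]
    exact X_pow_dvd_iff.1 ((X_pow_succ_dvd_val_zpow_sub hk hu a).mul_left g) n (by omega)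
  rw [hcongr, mul_sub, mul_one, map_sub, mul_smul_comm, map_zsmul, coeff_mul_X_pow']
  rcases hn.eq_or_lt with rfl | hlt
  · simp
  · simp [hlt.not_ge, hlt.ne]

end

namespace PowerSeries

noncomputable def truncProd (τ : ℕ → ℤ) (N : ℕ) : ℤ⟦X⟧ :=
  ((∏ i ∈ range N, oneSubXPowUnit i ^ τ i : ℤ⟦X⟧ˣ) : ℤ⟦X⟧)

theorem truncProd_congr {σ τ : ℕ → ℤ} {N : ℕ} (h : ∀ i < N, σ i = τ i) :
    truncProd σ N = truncProd τ N := by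
  unfold truncProd
  congr 1
  exact prod_congr rfl fun i hi => by rw [h i (mem_range.1 hi)]

theorem constantCoeff_truncProd (τ : ℕ → ℤ) (N : ℕ) : constantCoeff (truncProd τ N) = 1 := by
  have hu (i : ℕ) : Units.map constantCoeff.toMonoidHom (oneSubXPowUnit i) = 1 := by
    ext; simp [oneSubXPowUnit]
  change ((Units.map constantCoeff.toMonoidHom (∏ i ∈ range N, oneSubXPowUnit i ^ τ i) : ℤˣ) : ℤ)
    = 1
  rw [map_prod]
  simp only [map_zpow, hu, one_zpow, prod_const_one, Units.val_one]

theorem coeff_truncProd_succ (τ : ℕ → ℤ) {N n : ℕ} (hn : n ≤ N + 1) :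
    coeff n (truncProd τ (N + 1)) = coeff n (truncProd τ N) - if n = N + 1 then τ N else 0 := by
  rw [truncProd, prod_range_succ, Units.val_mul, ← truncProd,
    coeff_mul_val_zpow (by omega) rfl _ _ hn, constantCoeff_truncProd, smul_eq_mul, mul_one]

theorem coeff_eq_coeff_truncProd_iff {F : ℤ⟦X⟧} (hF : constantCoeff F = 1) (τ : ℕ → ℤ) :
    (∀ N n : ℕ, n ≤ N → coeff n F = coeff n (truncProd τ N)) ↔
      ∀ N, τ N = coeff (N + 1) (truncProd τ N) - coeff (N + 1) F := by
  constructor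
  · intro h N
    have := h (N + 1) (N + 1) le_rfl
    rw [coeff_truncProd_succ τ le_rfl, if_pos rfl] at this
    omega
  · intro h N
    induction N with
    | zero =>
      intro n hn
      rw [Nat.le_zero.1 hn, coeff_zero_eq_constantCoeff_apply, coeff_zero_eq_constantCoeff_apply,
        hF, constantCoeff_truncProd]
    | succ N ih =>
      intro n hn
      rw [coeff_truncProd_succ τ hn]
      split_ifs with hnN
      · subst hnN
        linarith [h N]
      · rw [ih n (by omega), sub_zero]

noncomputable def productExponents (F : ℤ⟦X⟧) : ℕ → ℤ
  | N =>
    coeff (N + 1)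
        ((∏ i ∈ (range N).attach, oneSubXPowUnit i ^ productExponents F i : ℤ⟦X⟧ˣ) : ℤ⟦X⟧) -
      coeff (N + 1) F
  decreasing_by exact mem_range.1 i.2

theorem productExponents_eq (F : ℤ⟦X⟧) (N : ℕ) :
    productExponents F N =
      coeff (N + 1) (truncProd (productExponents F) N) - coeff (N + 1) F := by
  rw [productExponents, truncProd,
    prod_attach (range N) fun i => oneSubXPowUnit i ^ productExponents F i]

theorem eq_productExponents {F : ℤ⟦X⟧} {τ : ℕ → ℤ}
    (h : ∀ N, τ N = coeff (N + 1) (truncProd τ N) - coeff (N + 1) F) :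
    τ = productExponents F := by
  funext N
  induction N using Nat.strong_induction_on with
  | _ N ih => rw [h, productExponents_eq, truncProd_congr ih]

end PowerSeries

/-- For any integer sequence `m(1), m(2), …` there is a unique
integer sequence `τ(1), τ(2), …` (here `τ i` denotes `τ(i+1)`, the exponent of
the factor `1 − t^{i+1}`) such that, as formal power series,
`1 − Σ_{k≥1} m(k) t^k = ∏_{n≥1} (1 − t^n)^{τ(n)}`; the infinite product is
interpreted t-adically via its truncations. -/
theorem exists_unique_product_exponents (m : ℕ → ℤ) :
    ∃! τ : ℕ → ℤ, ∀ N n : ℕ, n ≤ N →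
      (PowerSeries.coeff (R := ℤ) n)
          (PowerSeries.mk fun k => if k = 0 then 1 else -(m k)) =
      (PowerSeries.coeff (R := ℤ) n)
          (((∏ i ∈ Finset.range N, oneSubXPowUnit i ^ τ i :
              (PowerSeries ℤ)ˣ) : (PowerSeries ℤ)ˣ) : PowerSeries ℤ) := by
  have hF : constantCoeff (mk fun k => if k = 0 then 1 else -(m k)) = 1 := by
    simp [← coeff_zero_eq_constantCoeff_apply]
  exact ⟨_, (coeff_eq_coeff_truncProd_iff hF _).2 (productExponents_eq _),
    fun τ hτ => eq_productExponents ((coeff_eq_coeff_truncProd_iff hF τ).1 hτ)⟩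
end

section
/- There exists N ∈ ℕ such that every even integer y > N can be written as y = y₁² + y₂² + ⋯ + y₈² with integers 0 < y₁ < y₂ < ⋯ < y₈ satisfying y₁ + y₂ + ⋯ + y₈ ≡ 0 (mod 2). -/
private lemma sq_mod_class (x : ℕ) :
    (x % 2 = 1 ∧ x ^ 2 % 8 = 1) ∨ (x % 4 = 2 ∧ x ^ 2 % 8 = 4) ∨ (x % 4 = 0 ∧ x ^ 2 % 8 = 0) := by
  have hj : x % 4 = 0 ∨ x % 4 = 1 ∨ x % 4 = 2 ∨ x % 4 = 3 := by omega
  rcases hj with hj | hj | hj | hj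
  · refine Or.inr (Or.inr ⟨hj, ?_⟩)
    obtain ⟨k, hk⟩ : ∃ k, x = 4 * k := ⟨x / 4, by omega⟩
    have he : x ^ 2 = 8 * (2 * k ^ 2) := by subst hk; ring
    omega
  · refine Or.inl ⟨by omega, ?_⟩
    obtain ⟨k, hk⟩ : ∃ k, x = 4 * k + 1 := ⟨x / 4, by omega⟩
    have he : x ^ 2 = 8 * (2 * k ^ 2 + k) + 1 := by subst hk; ring
    omega
  · refine Or.inr (Or.inl ⟨hj, ?_⟩)
    obtain ⟨k, hk⟩ : ∃ k, x = 4 * k + 2 := ⟨x / 4, by omega⟩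
    have he : x ^ 2 = 8 * (2 * k ^ 2 + 2 * k) + 4 := by subst hk; ring
    omega
  · refine Or.inl ⟨by omega, ?_⟩
    obtain ⟨k, hk⟩ : ∃ k, x = 4 * k + 3 := ⟨x / 4, by omega⟩
    have he : x ^ 2 = 8 * (2 * k ^ 2 + 3 * k + 1) + 1 := by subst hk; ring
    omega

/-- any 4-square rep of `r ≡ 6 [MOD 8]` consists of two odds, one `≡2 [4]`, one `≡0 [4]`. -/
private lemma quad_classify (a b c d r : ℕ) (h : a ^ 2 + b ^ 2 + c ^ 2 + d ^ 2 = r)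
    (h8 : r % 8 = 6) :
    ∃ p q u v : ℕ, p ^ 2 + q ^ 2 + u ^ 2 + v ^ 2 = r ∧
      p % 2 = 1 ∧ q % 2 = 1 ∧ u % 4 = 2 ∧ v % 4 = 0 := by
  rcases sq_mod_class a with ⟨ha1, ha2⟩ | ⟨ha1, ha2⟩ | ⟨ha1, ha2⟩ <;>
  rcases sq_mod_class b with ⟨hb1, hb2⟩ | ⟨hb1, hb2⟩ | ⟨hb1, hb2⟩ <;>
  rcases sq_mod_class c with ⟨hc1, hc2⟩ | ⟨hc1, hc2⟩ | ⟨hc1, hc2⟩ <;>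
  rcases sq_mod_class d with ⟨hd1, hd2⟩ | ⟨hd1, hd2⟩ | ⟨hd1, hd2⟩ <;>
  first
    | exact ⟨a, b, c, d, by linear_combination (norm := ring_nf) h, ha1, hb1, hc1, hd1⟩
    | exact ⟨a, b, d, c, by linear_combination (norm := ring_nf) h, ha1, hb1, hd1, hc1⟩
    | exact ⟨a, c, b, d, by linear_combination (norm := ring_nf) h, ha1, hc1, hb1, hd1⟩
    | exact ⟨a, c, d, b, by linear_combination (norm := ring_nf) h, ha1, hc1, hd1, hb1⟩
    | exact ⟨a, d, b, c, by linear_combination (norm := ring_nf) h, ha1, hd1, hb1, hc1⟩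
    | exact ⟨a, d, c, b, by linear_combination (norm := ring_nf) h, ha1, hd1, hc1, hb1⟩
    | exact ⟨b, c, a, d, by linear_combination (norm := ring_nf) h, hb1, hc1, ha1, hd1⟩
    | exact ⟨b, c, d, a, by linear_combination (norm := ring_nf) h, hb1, hc1, hd1, ha1⟩
    | exact ⟨b, d, a, c, by linear_combination (norm := ring_nf) h, hb1, hd1, ha1, hc1⟩
    | exact ⟨b, d, c, a, by linear_combination (norm := ring_nf) h, hb1, hd1, hc1, ha1⟩
    | exact ⟨c, d, a, b, by linear_combination (norm := ring_nf) h, hc1, hd1, ha1, hb1⟩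
    | exact ⟨c, d, b, a, by linear_combination (norm := ring_nf) h, hc1, hd1, hb1, ha1⟩
    | omega


/-- largest `x ≡ c [MOD M]` with `x ≤ √Z`. -/
private lemma maxclass (M c Z : ℕ) (hM : 0 < M) (hcM : c < M) (hZ : M + c ≤ Nat.sqrt Z) :
    ∃ x : ℕ, x % M = c ∧ x ^ 2 ≤ Z ∧ Z < (x + M) ^ 2 ∧ c < x := by
  set z := Nat.sqrt Z with hz
  refine ⟨z - (z - c) % M, ?_, ?_, ?_, ?_⟩
  · have h1 : (z - c) % M < M := Nat.mod_lt _ hM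
    have h2 : (z - c) % M ≤ z - c := Nat.mod_le _ _
    have h3 : z - (z - c) % M = c + ((z - c) - (z - c) % M) := by omega
    have h4 : (z - c) - (z - c) % M = M * ((z - c) / M) := by
      have := Nat.mod_add_div (z - c) M; omega
    rw [h3, h4, Nat.add_mul_mod_self_left, Nat.mod_eq_of_lt hcM]
  · have h2 : z - (z - c) % M ≤ z := by omega
    calc (z - (z - c) % M) ^ 2 ≤ z ^ 2 := Nat.pow_le_pow_left h2 2
    _ ≤ Z := by rw [hz]; exact Nat.sqrt_le' Z
  · have h1 : (z - c) % M < M := Nat.mod_lt _ hM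
    have h2 : z + 1 ≤ z - (z - c) % M + M := by omega
    calc Z < (z + 1) ^ 2 := by
            simpa [Nat.succ_eq_add_one, hz] using Nat.lt_succ_sqrt' Z
    _ ≤ (z - (z - c) % M + M) ^ 2 := Nat.pow_le_pow_left h2 2
  · have h1 : (z - c) % M < M := Nat.mod_lt _ hM
    omega



private lemma pack8 (y z0 z1 z2 z3 z4 z5 z6 z7 : ℤ)
    (h01 : z0 ≠ z1)
    (h02 : z0 ≠ z2)
    (h03 : z0 ≠ z3)
    (h04 : z0 ≠ z4)
    (h05 : z0 ≠ z5)
    (h06 : z0 ≠ z6)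
    (h07 : z0 ≠ z7)
    (h12 : z1 ≠ z2)
    (h13 : z1 ≠ z3)
    (h14 : z1 ≠ z4)
    (h15 : z1 ≠ z5)
    (h16 : z1 ≠ z6)
    (h17 : z1 ≠ z7)
    (h23 : z2 ≠ z3)
    (h24 : z2 ≠ z4)
    (h25 : z2 ≠ z5)
    (h26 : z2 ≠ z6)
    (h27 : z2 ≠ z7)
    (h34 : z3 ≠ z4)
    (h35 : z3 ≠ z5)
    (h36 : z3 ≠ z6)
    (h37 : z3 ≠ z7)
    (h45 : z4 ≠ z5)
    (h46 : z4 ≠ z6)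
    (h47 : z4 ≠ z7)
    (h56 : z5 ≠ z6)
    (h57 : z5 ≠ z7)
    (h67 : z6 ≠ z7)
    (hp0 : 0 < z0)
    (hp1 : 0 < z1)
    (hp2 : 0 < z2)
    (hp3 : 0 < z3)
    (hp4 : 0 < z4)
    (hp5 : 0 < z5)
    (hp6 : 0 < z6)
    (hp7 : 0 < z7)
    (hs : z0 ^ 2 + z1 ^ 2 + z2 ^ 2 + z3 ^ 2 + z4 ^ 2 + z5 ^ 2 + z6 ^ 2 + z7 ^ 2 = y) (he : Even y) :
    ∃ a : Fin 8 → ℤ, StrictMono a ∧ 0 < a 0 ∧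
      y = ∑ i, a i ^ 2 ∧ Even (∑ i, a i) := by
  classical
  set s : Finset ℤ := {z0, z1, z2, z3, z4, z5, z6, z7} with hsdef
  have m0 : z0 ∉ ({z1, z2, z3, z4, z5, z6, z7} : Finset ℤ) := by
    simp only [Finset.mem_insert, Finset.mem_singleton]
    push_neg
    exact ⟨h01, h02, h03, h04, h05, h06, h07⟩
  have m1 : z1 ∉ ({z2, z3, z4, z5, z6, z7} : Finset ℤ) := by
    simp only [Finset.mem_insert, Finset.mem_singleton]
    push_neg
    exact ⟨h12, h13, h14, h15, h16, h17⟩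
  have m2 : z2 ∉ ({z3, z4, z5, z6, z7} : Finset ℤ) := by
    simp only [Finset.mem_insert, Finset.mem_singleton]
    push_neg
    exact ⟨h23, h24, h25, h26, h27⟩
  have m3 : z3 ∉ ({z4, z5, z6, z7} : Finset ℤ) := by
    simp only [Finset.mem_insert, Finset.mem_singleton]
    push_neg
    exact ⟨h34, h35, h36, h37⟩
  have m4 : z4 ∉ ({z5, z6, z7} : Finset ℤ) := by
    simp only [Finset.mem_insert, Finset.mem_singleton]
    push_neg
    exact ⟨h45, h46, h47⟩
  have m5 : z5 ∉ ({z6, z7} : Finset ℤ) := by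
    simp only [Finset.mem_insert, Finset.mem_singleton]
    push_neg
    exact ⟨h56, h57⟩
  have m6 : z6 ∉ ({z7} : Finset ℤ) := by
    simp only [Finset.mem_singleton]
    exact h67
  have hcard : s.card = 8 := by
    rw [hsdef]
    rw [Finset.card_insert_of_notMem m0, Finset.card_insert_of_notMem m1,
      Finset.card_insert_of_notMem m2, Finset.card_insert_of_notMem m3,
      Finset.card_insert_of_notMem m4, Finset.card_insert_of_notMem m5,
      Finset.card_insert_of_notMem m6, Finset.card_singleton]
  have hmem : ∀ x ∈ s, 0 < x := by
    intro x hx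
    rw [hsdef] at hx
    simp only [Finset.mem_insert, Finset.mem_singleton] at hx
    rcases hx with h|h|h|h|h|h|h|h <;> subst h <;> assumption
  have hsumsq : ∀ (F : ℤ → ℤ), ∑ x ∈ s, F x = F z0 + F z1 + F z2 + F z3 + F z4 + F z5 + F z6 + F z7 := by
    intro F
    rw [hsdef]
    rw [Finset.sum_insert m0, Finset.sum_insert m1, Finset.sum_insert m2,
      Finset.sum_insert m3, Finset.sum_insert m4, Finset.sum_insert m5,
      Finset.sum_insert m6, Finset.sum_singleton]
    ring
  set oi := s.orderIsoOfFin hcard with hoi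
  refine ⟨fun i => (oi i : ℤ), ?_, ?_, ?_, ?_⟩
  · intro i j hij
    exact oi.strictMono hij
  · show 0 < ((oi 0 : s) : ℤ)
    exact hmem _ (oi 0).2
  · have h1 : ∑ i : Fin 8, ((oi i : s) : ℤ) ^ 2 = ∑ x ∈ s, x ^ 2 := by
      rw [← Finset.sum_coe_sort s (fun x => x ^ 2)]
      exact Fintype.sum_equiv oi.toEquiv _ _ (fun i => rfl)
    rw [h1, hsumsq (fun x => x ^ 2)]
    exact hs.symm
  · have h1 : ∑ i : Fin 8, ((oi i : s) : ℤ) = ∑ x ∈ s, x := by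
      rw [← Finset.sum_coe_sort s (fun x => x)]
      exact Fintype.sum_equiv oi.toEquiv _ _ (fun i => rfl)
    rw [h1, hsumsq (fun x => x)]
    have hev : Even ((z0^2 - z0) + (z1^2 - z1) + (z2^2 - z2) + (z3^2 - z3) + (z4^2 - z4)
        + (z5^2 - z5) + (z6^2 - z6) + (z7^2 - z7)) := by
      have e8 : ∀ z : ℤ, Even (z ^ 2 - z) := by
        intro z
        have hzz : z ^ 2 - z = (z - 1) * ((z - 1) + 1) := by ring
        rw [hzz]; exact Int.even_mul_succ_self _
      exact (((((((e8 z0).add (e8 z1)).add (e8 z2)).add (e8 z3)).add (e8 z4)).add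
        (e8 z5)).add (e8 z6)).add (e8 z7)
    rcases he with ⟨m, hm⟩
    rcases hev with ⟨k, hk⟩
    refine ⟨m - k, by linarith⟩

set_option maxHeartbeats 3000000 in
private lemma build (y g e f f1 f2 β r : ℕ)
    (hy : y = 25 * g ^ 2 + (e ^ 2 + f ^ 2) + β ^ 2 + r)
    (hid : f1 ^ 2 + f2 ^ 2 + 8 = e ^ 2 + f ^ 2)
    (hr8 : r % 8 = 6)
    (hβ3 : 3 ≤ β)
    (hq : r + 8 < (β - 2) ^ 2)
    (hβf1 : β < f1) (hf1e : f1 < e) (hef : e < f) (hff2 : f < f2) (hf2g : f2 < 3 * g)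
    (hEy : Even y) :
    ∃ a : Fin 8 → ℤ, StrictMono a ∧ 0 < a 0 ∧
      (y : ℤ) = ∑ i, a i ^ 2 ∧ Even (∑ i, a i) := by
  obtain ⟨A, B, C, D, hABCD⟩ := Nat.sum_four_squares r
  obtain ⟨p, q, u, w, hsum, hp2, hq2, hu4, hw4⟩ := quad_classify A B C D r hABCD hr8
  clear hABCD
  have hple : ∀ t : ℕ, t ^ 2 ≤ r + 8 → t + 2 < β := by
    intro t ht
    have h1 : t ^ 2 < (β - 2) ^ 2 := lt_of_le_of_lt ht hq
    have h2 : t < β - 2 := by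
      by_contra hc
      exact absurd (Nat.pow_le_pow_left (le_of_not_gt hc) 2) (not_le.mpr h1)
    omega
  have hpβ : p + 2 < β := hple p (by nlinarith [hsum])
  have hqβ : q + 2 < β := hple q (by nlinarith [hsum])
  have huβ : u + 2 < β := hple u (by nlinarith [hsum])
  have hwβ : w + 2 < β := hple w (by nlinarith [hsum])
  clear hple hq
  have hEyZ : Even (y : ℤ) := by exact_mod_cast hEy
  have hyZ : (y : ℤ) = 25 * (g:ℤ) ^ 2 + ((e:ℤ) ^ 2 + (f:ℤ) ^ 2) + (β:ℤ) ^ 2 + (r:ℤ) := by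
    exact_mod_cast hy
  have hidZ : (f1:ℤ) ^ 2 + (f2:ℤ) ^ 2 + 8 = (e:ℤ) ^ 2 + (f:ℤ) ^ 2 := by exact_mod_cast hid
  have hsumZ : (p:ℤ) ^ 2 + (q:ℤ) ^ 2 + (u:ℤ) ^ 2 + (w:ℤ) ^ 2 = (r:ℤ) := by exact_mod_cast hsum
  clear hy hid hsum
  rcases eq_or_ne p q with hpq | hpq
  · subst hpq
    rcases (show p = 1 ∨ 3 ≤ p by omega) with hp1 | hp3
    · subst hp1
      rcases Nat.eq_zero_or_pos w with hw0 | hw0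
      · subst hw0
        refine pack8 (y:ℤ) (3*(g:ℤ)) (4*(g:ℤ)) ((f1:ℤ)) ((f2:ℤ)) ((β:ℤ)) (3) (1) ((u:ℤ))
            (by omega)
            (by omega)
            (by omega)
            (by omega)
            (by omega)
            (by omega)
            (by omega)
            (by omega)
            (by omega)
            (by omega)
            (by omega)
            (by omega)
            (by omega)
            (by omega)
            (by omega)
            (by omega)
            (by omega)
            (by omega)
            (by omega)
            (by omega)
            (by omega)
            (by omega)
            (by omega)
            (by omega)
            (by omega)
            (by omega)
            (by omega)
            (by omega)
            (by omega)
            (by omega)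
            (by omega)
            (by omega)
            (by omega)
            (by omega)
            (by omega)
            (by omega)
            ?_ hEyZ
        push_cast
        linear_combination hsumZ - hyZ + hidZ
      · refine pack8 (y:ℤ) (5*(g:ℤ)) ((f1:ℤ)) ((f2:ℤ)) ((β:ℤ)) (3) (1) ((u:ℤ)) ((w:ℤ))
            (by omega)
            (by omega)
            (by omega)
            (by omega)
            (by omega)
            (by omega)
            (by omega)
            (by omega)
            (by omega)
            (by omega)
            (by omega)
            (by omega)
            (by omega)
            (by omega)
            (by omega)
            (by omega)
            (by omega)
            (by omega)
            (by omega)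
            (by omega)
            (by omega)
            (by omega)
            (by omega)
            (by omega)
            (by omega)
            (by omega)
            (by omega)
            (by omega)
            (by omega)
            (by omega)
            (by omega)
            (by omega)
            (by omega)
            (by omega)
            (by omega)
            (by omega)
            ?_ hEyZ
        push_cast
        linear_combination hsumZ - hyZ + hidZ
    · rcases Nat.eq_zero_or_pos w with hw0 | hw0
      · subst hw0
        refine pack8 (y:ℤ) (3*(g:ℤ)) (4*(g:ℤ)) ((f1:ℤ)) ((f2:ℤ)) ((β:ℤ)) ((p:ℤ)+2) ((p:ℤ)-2) ((u:ℤ))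
            (by omega)
            (by omega)
            (by omega)
            (by omega)
            (by omega)
            (by omega)
            (by omega)
            (by omega)
            (by omega)
            (by omega)
            (by omega)
            (by omega)
            (by omega)
            (by omega)
            (by omega)
            (by omega)
            (by omega)
            (by omega)
            (by omega)
            (by omega)
            (by omega)
            (by omega)
            (by omega)
            (by omega)
            (by omega)
            (by omega)
            (by omega)
            (by omega)
            (by omega)
            (by omega)
            (by omega)
            (by omega)
            (by omega)
            (by omega)
            (by omega)
            (by omega)
            ?_ hEyZ
        push_cast
        linear_combination hsumZ - hyZ + hidZ
      · refine pack8 (y:ℤ) (5*(g:ℤ)) ((f1:ℤ)) ((f2:ℤ)) ((β:ℤ)) ((p:ℤ)+2) ((p:ℤ)-2) ((u:ℤ)) ((w:ℤ))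
            (by omega)
            (by omega)
            (by omega)
            (by omega)
            (by omega)
            (by omega)
            (by omega)
            (by omega)
            (by omega)
            (by omega)
            (by omega)
            (by omega)
            (by omega)
            (by omega)
            (by omega)
            (by omega)
            (by omega)
            (by omega)
            (by omega)
            (by omega)
            (by omega)
            (by omega)
            (by omega)
            (by omega)
            (by omega)
            (by omega)
            (by omega)
            (by omega)
            (by omega)
            (by omega)
            (by omega)
            (by omega)
            (by omega)
            (by omega)
            (by omega)
            (by omega)
            ?_ hEyZ
        push_cast
        linear_combination hsumZ - hyZ + hidZ
  · rcases Nat.eq_zero_or_pos w with hw0 | hw0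
    · subst hw0
      refine pack8 (y:ℤ) (3*(g:ℤ)) (4*(g:ℤ)) ((e:ℤ)) ((f:ℤ)) ((β:ℤ)) ((p:ℤ)) ((q:ℤ)) ((u:ℤ))
          (by omega)
          (by omega)
          (by omega)
          (by omega)
          (by omega)
          (by omega)
          (by omega)
          (by omega)
          (by omega)
          (by omega)
          (by omega)
          (by omega)
          (by omega)
          (by omega)
          (by omega)
          (by omega)
          (by omega)
          (by omega)
          (by omega)
          (by omega)
          (by omega)
          (by omega)
          (by omega)
          (by omega)
          (by omega)
          (by omega)
          (by omega)
          (by omega)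
          (by omega)
          (by omega)
          (by omega)
          (by omega)
          (by omega)
          (by omega)
          (by omega)
          (by omega)
          ?_ hEyZ
      push_cast
      linear_combination hsumZ - hyZ
    · refine pack8 (y:ℤ) (5*(g:ℤ)) ((e:ℤ)) ((f:ℤ)) ((β:ℤ)) ((p:ℤ)) ((q:ℤ)) ((u:ℤ)) ((w:ℤ))
          (by omega)
          (by omega)
          (by omega)
          (by omega)
          (by omega)
          (by omega)
          (by omega)
          (by omega)
          (by omega)
          (by omega)
          (by omega)
          (by omega)
          (by omega)
          (by omega)
          (by omega)
          (by omega)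
          (by omega)
          (by omega)
          (by omega)
          (by omega)
          (by omega)
          (by omega)
          (by omega)
          (by omega)
          (by omega)
          (by omega)
          (by omega)
          (by omega)
          (by omega)
          (by omega)
          (by omega)
          (by omega)
          (by omega)
          (by omega)
          (by omega)
          (by omega)
          ?_ hEyZ
      push_cast
      linear_combination hsumZ - hyZ

private lemma sqle {a b : ℕ} (h : a ^ 2 ≤ b ^ 2) : a ≤ b := by
  by_contra hc
  push_neg at hc
  have h2 : (b + 1) ^ 2 ≤ a ^ 2 := Nat.pow_le_pow_left (by omega) 2
  have h3 : (b + 1) ^ 2 = b ^ 2 + 2 * b + 1 := by ring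
  omega

private lemma quadU (U C : ℤ) (h0 : 0 ≤ C) (h : U ^ 2 ≤ 300 * U + C ^ 2) :
    U ≤ C + 300 := by
  nlinarith [sq_nonneg (U - C - 300), sq_nonneg (U + C)]

private lemma eupZ (e W : ℤ) (he : 0 ≤ e) (hW : 0 ≤ W) (h : 10 * e ^ 2 ≤ 1750 * (W + 1) ^ 2) :
    e ≤ 14 * W + 14 := by
  nlinarith [sq_nonneg (e - 14 * W - 14)]

set_option maxHeartbeats 1000000 in
private lemma chain (n ce cβ : ℕ) (hn : 10 ^ 18 < n) (hEn : Even n)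
    (hce : ce ≤ 1) (hcβ : cβ = 0 ∨ cβ = 2)
    (hmod : (2 * ce + 2 * cβ + 6) % 8 = n % 8) :
    ∃ a : Fin 8 → ℤ, StrictMono a ∧ 0 < a 0 ∧
      (n : ℤ) = ∑ i, a i ^ 2 ∧ Even (∑ i, a i) := by
  -- level U
  set U := Nat.sqrt n with hUdef
  have hU1 : U ^ 2 ≤ n := Nat.sqrt_le' n
  have hU2 : n < (U + 1) ^ 2 := by simpa [Nat.succ_eq_add_one] using Nat.lt_succ_sqrt' n
  have hUbig : 10 ^ 9 ≤ U + 1 := by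
    refine sqle ?_
    have : (10 ^ 9 : ℕ) ^ 2 = 10 ^ 18 := by norm_num
    omega
  have hUsq : U ^ 2 = U * U := by ring
  have hUn : 300000 * U ≤ n := by
    have h1 : 300000 * U ≤ U * U := Nat.mul_le_mul_right U (by omega)
    omega
  have h300 : 300 * U ≤ n := by omega
  obtain ⟨D, hD⟩ : ∃ D, n = 300 * U + D := ⟨n - 300 * U, by omega⟩
  have hDbig : 6 * 10 ^ 17 ≤ D := by omega
  -- level g
  set Zg := D / 25 with hZgdef
  have hZg1 : 25 * Zg ≤ D := by have := Nat.div_add_mod D 25; omega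
  have hZg2 : D < 25 * Zg + 25 := by
    have h1 := Nat.div_add_mod D 25
    have h2 : D % 25 < 25 := Nat.mod_lt _ (by norm_num)
    omega
  obtain ⟨g, hg4, hgZ, hgZ2, -⟩ := maxclass 4 0 Zg (by norm_num) (by norm_num)
    (by simp only [Nat.add_zero]; exact Nat.le_sqrt.mpr (by omega))
  have hgsq : 25 * g ^ 2 ≤ D := by
    have h1 : g ^ 2 ≤ Zg := hgZ
    omega
  obtain ⟨R1, hR1⟩ : ∃ R1, n = 25 * g ^ 2 + R1 := ⟨n - 25 * g ^ 2, by omega⟩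
  have hUg : 5 * g ≤ U := by
    refine Nat.le_sqrt.mpr ?_
    have h1 : 5 * g * (5 * g) = 25 * g ^ 2 := by ring
    omega
  have hgexp : (g + 4) ^ 2 = g ^ 2 + 8 * g + 16 := by ring
  have hgbig : 10 ^ 8 ≤ g := by
    have h1 : (15 * 10 ^ 7 + 4 : ℕ) ^ 2 ≤ (g + 4) ^ 2 := by
      have h2 : (15 * 10 ^ 7 + 4 : ℕ) ^ 2 = 22500001200000016 := by norm_num
      omega
    have h3 := sqle h1
    omega
  have hUup : U ≤ 5 * g + 325 := by
    have hC : (0 : ℤ) ≤ 5 * (g : ℤ) + 25 := by positivity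
    have hh : (U : ℤ) ^ 2 ≤ 300 * (U : ℤ) + (5 * (g : ℤ) + 25) ^ 2 := by
      have h1 : (5 * (g : ℤ) + 25) ^ 2 = 25 * (g : ℤ) ^ 2 + 250 * (g : ℤ) + 625 := by ring
      have h2 : U ^ 2 ≤ 300 * U + (25 * g ^ 2 + 250 * g + 625) := by omega
      have h2' : (U : ℤ) ^ 2 ≤ 300 * (U : ℤ) + (25 * (g : ℤ) ^ 2 + 250 * (g : ℤ) + 625) := by
        exact_mod_cast h2
      omega
    have := quadU (U : ℤ) (5 * (g : ℤ) + 25) hC hh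
    omega
  have hR1low : 1500 * g ≤ R1 := by omega
  have hR1up : R1 ≤ 1750 * g := by omega
  -- level W
  set W := Nat.sqrt g with hWdef
  have hW1 : W ^ 2 ≤ g := Nat.sqrt_le' g
  have hW2 : g < (W + 1) ^ 2 := by simpa [Nat.succ_eq_add_one] using Nat.lt_succ_sqrt' g
  have hWexp : (W + 1) ^ 2 = W ^ 2 + 2 * W + 1 := by ring
  have hWbig : 10 ^ 4 ≤ W := by
    have h1 : (10 ^ 4 + 1 : ℕ) ^ 2 ≤ (W + 1) ^ 2 := by
      have h2 : (10 ^ 4 + 1 : ℕ) ^ 2 = 100020001 := by norm_num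
      omega
    have h3 := sqle h1
    omega
  have hWW : 10000 * W ≤ W ^ 2 := by
    have h1 : 10000 * W ≤ W * W := Nat.mul_le_mul_right W hWbig
    have h2 : W ^ 2 = W * W := by ring
    omega
  -- level e
  have h3000 : 3000 * W ≤ R1 := by omega
  obtain ⟨E, hE⟩ : ∃ E, R1 = 3000 * W + E := ⟨R1 - 3000 * W, by omega⟩
  have hEbig : 1300 * W ^ 2 ≤ E := by omega
  set Ze := E / 10 with hZedef
  have hZe1 : 10 * Ze ≤ E := by have := Nat.div_add_mod E 10; omega
  have hZe2 : E < 10 * Ze + 10 := by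
    have h1 := Nat.div_add_mod E 10
    have h2 : E % 10 < 10 := Nat.mod_lt _ (by norm_num)
    omega
  obtain ⟨e, he2, heZ, heZ2, -⟩ := maxclass 2 ce Ze (by norm_num) (by omega)
    (by
      refine Nat.le_sqrt.mpr ?_
      have h1 : (2 + ce) * (2 + ce) ≤ 9 := by
        rcases (show ce = 0 ∨ ce = 1 by omega) with h | h <;> rw [h] <;> norm_num
      omega)
  have h10e : 10 * e ^ 2 ≤ E := by
    have h1 : e ^ 2 ≤ Ze := heZ
    omega
  have heexp : (e + 2) ^ 2 = e ^ 2 + 4 * e + 4 := by ring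
  have heup : e ≤ 14 * W + 14 := by
    have h1 : 10 * e ^ 2 ≤ 1750 * (W + 1) ^ 2 := by omega
    have h1' : 10 * (e : ℤ) ^ 2 ≤ 1750 * ((W : ℤ) + 1) ^ 2 := by exact_mod_cast h1
    have := eupZ (e : ℤ) (W : ℤ) (by positivity) (by positivity) h1'
    omega
  have helow : 11 * W ≤ e := by
    have h1 : (11 * W + 2) ^ 2 ≤ (e + 2) ^ 2 := by
      have h2 : (11 * W + 2) ^ 2 = 121 * W ^ 2 + 44 * W + 4 := by ring
      omega
    have h3 := sqle h1
    omega
  obtain ⟨f, hf⟩ : ∃ f, f + 12 = 3 * e := ⟨3 * e - 12, by omega⟩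
  set pair := e ^ 2 + f ^ 2 with hpairdef
  have hfZ : (f : ℤ) = 3 * (e : ℤ) - 12 := by omega
  have hpair_eq : pair + 72 * e = 10 * e ^ 2 + 144 := by
    have hZ : ((e ^ 2 + f ^ 2 : ℕ) : ℤ) + 72 * (e : ℤ) = 10 * (e : ℤ) ^ 2 + 144 := by
      push_cast
      linear_combination ((f : ℤ) + 3 * (e : ℤ) - 12) * hfZ
    exact_mod_cast hZ
  have hpairR1 : pair ≤ R1 := by omega
  obtain ⟨R2, hR2⟩ : ∃ R2, R1 = pair + R2 := ⟨R1 - pair, by omega⟩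
  have hR2low : 3000 * W ≤ R2 := by omega
  have hR2up : R2 ≤ 4600 * W := by omega
  -- level β
  obtain ⟨E2, hE2⟩ : ∃ E2, R2 = 1000 * W + E2 := ⟨R2 - 1000 * W, by omega⟩
  have hE2low : 2000 * W ≤ E2 := by omega
  have hE2up : E2 ≤ 3600 * W := by omega
  obtain ⟨β, hβ4, hβZ, hβZ2, -⟩ := maxclass 4 cβ E2 (by norm_num) (by omega)
    (by
      refine Nat.le_sqrt.mpr ?_
      have h1 : (4 + cβ) * (4 + cβ) ≤ 36 := by
        rcases hcβ with h | h <;> rw [h] <;> norm_num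
      omega)
  have hβexp : (β + 4) ^ 2 = β ^ 2 + 8 * β + 16 := by ring
  obtain ⟨r, hr⟩ : ∃ r, R2 = β ^ 2 + r := ⟨R2 - β ^ 2, by omega⟩
  have hrlow : 1000 * W ≤ r := by omega
  have hrup : r < 1000 * W + 8 * β + 17 := by omega
  have hβup : 10 * β ≤ 6 * W := by
    have h1 : (10 * β) ^ 2 ≤ (6 * W) ^ 2 := by
      have h2 : (10 * β) ^ 2 = 100 * β ^ 2 := by ring
      have h3 : (6 * W) ^ 2 = 36 * W ^ 2 := by ring
      omega
    exact sqle h1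
  have hβlow2 : 1980 * W ≤ β ^ 2 := by omega
  have hβ3 : 3 ≤ β := by
    have h1 : 3 ^ 2 ≤ β ^ 2 := by omega
    exact sqle h1
  obtain ⟨b', hb'⟩ : ∃ b', β = b' + 2 := ⟨β - 2, by omega⟩
  have hββ : β ^ 2 = b' ^ 2 + 4 * b' + 4 := by rw [hb']; ring
  have hq : r + 8 < (β - 2) ^ 2 := by
    have hβb : β - 2 = b' := by omega
    rw [hβb]
    omega
  -- orderings
  obtain ⟨f1, hf1⟩ : ∃ f1, f1 + 6 = e := ⟨e - 6, by omega⟩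
  obtain ⟨f2, hf2⟩ : ∃ f2, f2 + 10 = 3 * e := ⟨3 * e - 10, by omega⟩
  have hβf1 : β < f1 := by omega
  have hf1e : f1 < e := by omega
  have hef : e < f := by omega
  have hff2 : f < f2 := by omega
  have hf2g : f2 < 3 * g := by omega
  -- identity
  have hid : f1 ^ 2 + f2 ^ 2 + 8 = e ^ 2 + f ^ 2 := by
    have hf1Z : (f1 : ℤ) = (e : ℤ) - 6 := by omega
    have hf2Z : (f2 : ℤ) = 3 * (e : ℤ) - 10 := by omega
    have hZ : (f1 : ℤ) ^ 2 + (f2 : ℤ) ^ 2 + 8 = (e : ℤ) ^ 2 + (f : ℤ) ^ 2 := by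
      linear_combination ((f1 : ℤ) + (e : ℤ) - 6) * hf1Z +
        ((f2 : ℤ) + 3 * (e : ℤ) - 10) * hf2Z - ((f : ℤ) + 3 * (e : ℤ) - 12) * hfZ
    exact_mod_cast hZ
  -- main equation
  have hy : n = 25 * g ^ 2 + (e ^ 2 + f ^ 2) + β ^ 2 + r := by omega
  clear hU1 hU2 hUbig hUsq hUn h300 hDbig hZg1 hZg2 hgZ hgZ2 hgsq hUg hgexp hgbig hUup
  clear hR1low hR1up hW1 hW2 hWexp hWbig hWW h3000 hEbig hZe1 hZe2 heZ heZ2 h10e heexp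
  clear heup helow hpairR1 hR2low hR2up hE2low hE2up hβZ hβZ2 hβexp hrlow hrup
  clear hβup hβlow2 hββ hD hE hE2 hR1 hR2 hr hb' hn hfZ
  -- residues
  have hg8 : 25 * g ^ 2 % 8 = 0 := by
    obtain ⟨k, hk⟩ : ∃ k, g = 4 * k := ⟨g / 4, by omega⟩
    have h1 : 25 * g ^ 2 = 8 * (50 * k ^ 2) := by rw [hk]; ring
    omega
  have hpair8 : pair % 8 = 2 * ce := by
    rcases (show ce = 0 ∨ ce = 1 by omega) with hc | hc
    · obtain ⟨m, hm⟩ : ∃ m, e = 2 * m := ⟨e / 2, by omega⟩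
      have hee : e ^ 2 = 4 * m ^ 2 := by rw [hm]; ring
      subst hc; omega
    · obtain ⟨m, hm⟩ : ∃ m, e = 2 * m + 1 := ⟨e / 2, by omega⟩
      have hee : e ^ 2 = 4 * m ^ 2 + 4 * m + 1 := by rw [hm]; ring
      subst hc; omega
  have hβ8 : β ^ 2 % 8 = 2 * cβ := by
    rcases hcβ with hc | hc
    · obtain ⟨j, hj⟩ : ∃ j, β = 4 * j := ⟨β / 4, by omega⟩
      have h1 : β ^ 2 = 8 * (2 * j ^ 2) := by rw [hj]; ring
      subst hc; omega
    · obtain ⟨j, hj⟩ : ∃ j, β = 4 * j + 2 := ⟨β / 4, by omega⟩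
      have h1 : β ^ 2 = 8 * (2 * j ^ 2 + 2 * j) + 4 := by rw [hj]; ring
      subst hc; omega
  have hr8 : r % 8 = 6 := by omega
  exact build n g e f f1 f2 β r hy hid hr8 hβ3 hq hβf1 hf1e hef hff2 hf2g hEn

/-- There exists `N` such that every even integer `y > N` can be
written as `y = y₁² + ⋯ + y₈²` with `0 < y₁ < y₂ < ⋯ < y₈` and
`y₁ + ⋯ + y₈ ≡ 0 (mod 2)`. -/

theorem large_even_sum_of_eight_distinct_squares :
    ∃ N : ℕ, ∀ y : ℤ, Even y → (N : ℤ) < y →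
      ∃ a : Fin 8 → ℤ, StrictMono a ∧ 0 < a 0 ∧
        y = ∑ i, (a i) ^ 2 ∧ Even (∑ i, a i) := by
  refine ⟨10 ^ 18, ?_⟩
  intro y hEy hNy
  obtain ⟨n, rfl⟩ : ∃ n : ℕ, y = (n : ℤ) :=
    ⟨y.toNat, (Int.toNat_of_nonneg (by push_cast at hNy ⊢; omega)).symm⟩
  have hn : 10 ^ 18 < n := by exact_mod_cast hNy
  have hEn : Even n := by exact_mod_cast hEy
  have h2 : n % 2 = 0 := Nat.even_iff.mp hEn
  rcases (show n % 8 = 0 ∨ n % 8 = 2 ∨ n % 8 = 4 ∨ n % 8 = 6 by omega) with h8 | h8 | h8 | h8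
  · exact chain n 1 0 hn hEn (by norm_num) (Or.inl rfl) (by omega)
  · exact chain n 0 2 hn hEn (by norm_num) (Or.inr rfl) (by omega)
  · exact chain n 1 2 hn hEn (by norm_num) (Or.inr rfl) (by omega)
  · exact chain n 0 0 hn hEn (by norm_num) (Or.inl rfl) (by omega)
end

section
/- As formal power series in the variable u (where u plays the role of q^{1/24}), one has Σ_{n≥1} χ₁₂(n) u^{n²} = u · ∏_{k≥1} (1 − u^{24k}), where χ₁₂(n) equals 1 if n ≡ ±1 (mod 12), −1 if n ≡ ±5 (mod 12), and 0 otherwise. -/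
/-- The character `χ₁₂(n)`: `1` if `n ≡ ±1 (mod 12)`, `−1` if `n ≡ ±5 (mod 12)`,
`0` otherwise. -/
def chi12 (n : ℕ) : ℤ :=
  if n % 12 = 1 ∨ n % 12 = 11 then 1
  else if n % 12 = 5 ∨ n % 12 = 7 then -1
  else 0

/-!
This is Euler's pentagonal number theorem `∏ (1 - qᵏ) = Σ_{k ∈ ℤ} (-1)ᵏ q^{k(3k-1)/2}` in the
variable `q = u²⁴`. Indeed `χ₁₂(r) ≠ 0` exactly when `r = |6k - 1|` for some `k ∈ ℤ`, and then
`r² = 24 · k(3k-1)/2 + 1` and `χ₁₂(r) = (-1)ᵏ`. Truncating the product after `N` factors does not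
change the coefficients up to `u^N`, since the omitted factors are `≡ 1 mod u^{N+1}`.
-/

open Finset PowerSeries Filter

section

variable {R : Type*} [CommRing R]

theorem X_pow_dvd_prod_Ico_one_sub_X_pow_sub_one (N M : ℕ) :
    (X : R⟦X⟧) ^ (N + 1) ∣ ∏ k ∈ Ico N M, (1 - X ^ (k + 1)) - 1 := by
  refine prod_induction _ (fun g => (X : R⟦X⟧) ^ (N + 1) ∣ g - 1) (fun a b ha hb => ?_)
    (by simp) (fun k hk => ?_)
  · rw [show a * b - 1 = (a - 1) * b + (b - 1) by ring]
    exact dvd_add (dvd_mul_of_dvd_left ha b) hb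
  · rw [sub_sub_cancel_left]
    exact (pow_dvd_pow X (by simpa using (mem_Ico.mp hk).1)).neg_right

theorem coeff_prod_range_one_sub_X_pow_eq_of_le {n N M : ℕ} (hn : n ≤ N) (hNM : N ≤ M) :
    coeff n (∏ k ∈ range M, (1 - X ^ (k + 1) : R⟦X⟧)) =
      coeff n (∏ k ∈ range N, (1 - X ^ (k + 1) : R⟦X⟧)) := by
  obtain ⟨g, hg⟩ := X_pow_dvd_prod_Ico_one_sub_X_pow_sub_one (R := R) N M
  rw [← prod_range_mul_prod_Ico _ hNM, eq_add_of_sub_eq hg, mul_add, mul_one, map_add,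
    mul_left_comm, coeff_X_pow_mul', if_neg (by omega), zero_add]

theorem coeff_prod_range_one_sub_X_pow_eq_coeff_pentagonalSeries {n N : ℕ} (hn : n ≤ N) :
    coeff n (∏ k ∈ range N, (1 - X ^ (k + 1) : R⟦X⟧)) = coeff n (pentagonalSeries R) := by
  obtain ⟨M, hM, hNM⟩ := ((tendsto_finset_range.eventually
    (coeff_prod_one_sub_X_pow_eventually_eq R n)).and (eventually_ge_atTop N)).exists
  rw [← coeff_prod_range_one_sub_X_pow_eq_of_le hn hNM, hM]

theorem prod_range_one_sub_X_pow_mul_eq_expand (p : ℕ) (hp : p ≠ 0) (N : ℕ) :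
    ∏ k ∈ range N, (1 - X ^ (p * (k + 1)) : R⟦X⟧) =
      expand p hp (∏ k ∈ range N, (1 - X ^ (k + 1))) := by
  simp [map_prod, pow_mul]

end

theorem chi12_natAbs_six_mul_sub_one (k : ℤ) : chi12 (6 * k - 1).natAbs = k.negOnePow := by
  obtain ⟨a, rfl | rfl⟩ := Int.even_or_odd' k <;>
  · simp only [Int.negOnePow_two_mul, Int.negOnePow_two_mul_add_one, chi12]
    split_ifs <;> first | rfl | omega

theorem natAbs_six_mul_sub_one_sq (k : ℤ) : (6 * k - 1).natAbs ^ 2 = 24 * pentagonal k + 1 := by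
  zify
  rw [sq_abs]
  linear_combination -12 * two_mul_natCast_pentagonal k

theorem exists_natAbs_six_mul_sub_one_eq {r : ℕ} (h : chi12 r ≠ 0) :
    ∃ k : ℤ, (6 * k - 1).natAbs = r := by
  have hr : r % 6 = 1 ∨ r % 6 = 5 := by
    unfold chi12 at h
    split_ifs at h <;> omega
  rcases hr with hr | hr
  · exact ⟨-((r / 6 : ℕ) : ℤ), by omega⟩
  · exact ⟨((r / 6 + 1 : ℕ) : ℤ), by omega⟩

def chi12OfSqrt (n : ℕ) : ℤ := if Nat.sqrt n ^ 2 = n then chi12 (Nat.sqrt n) else 0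

theorem chi12OfSqrt_pentagonal (k : ℤ) : chi12OfSqrt (24 * pentagonal k + 1) = k.negOnePow := by
  rw [← natAbs_six_mul_sub_one_sq, chi12OfSqrt, Nat.sqrt_eq', if_pos rfl,
    chi12_natAbs_six_mul_sub_one]

theorem exists_pentagonal_of_chi12OfSqrt_ne_zero {n : ℕ} (h : chi12OfSqrt n ≠ 0) :
    ∃ k, 24 * pentagonal k + 1 = n := by
  obtain ⟨hsq, hchi⟩ := ite_ne_right_iff.mp h
  obtain ⟨k, hk⟩ := exists_natAbs_six_mul_sub_one_eq hchi
  exact ⟨k, by rw [← natAbs_six_mul_sub_one_sq, hk, hsq]⟩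

theorem mk_chi12OfSqrt_eq_X_mul_expand_pentagonalSeries :
    mk chi12OfSqrt = X * expand 24 (by norm_num) (pentagonalSeries ℤ) := by
  ext n
  rw [coeff_mk]
  by_cases hn : ∃ k, 24 * pentagonal k + 1 = n
  · obtain ⟨k, rfl⟩ := hn
    rw [chi12OfSqrt_pentagonal, coeff_succ_X_mul, coeff_expand_mul,
      coeff_pentagonalSeries_pentagonal, Int.cast_id]
  · rw [not_imp_comm.mp exists_pentagonal_of_chi12OfSqrt_ne_zero hn]
    rcases n with _ | j
    · simp
    · rw [coeff_succ_X_mul, coeff_expand]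
      split_ifs with hj
      · obtain ⟨m, rfl⟩ := hj
        rw [Nat.mul_div_cancel_left _ (by norm_num), coeff_pentagonalSeries_eq_zero]
        rintro ⟨k, rfl⟩
        exact hn ⟨k, rfl⟩
      · rfl

/-- The eta-function identity
`Σ_{n≥1} χ₁₂(n) u^{n²} = u · ∏_{k≥1} (1 − u^{24k})` in `ℤ[[u]]`.
The left side is the power series whose `N`-th coefficient is `χ₁₂(√N)` when
`N` is a perfect square (and `0` otherwise, noting `χ₁₂(0) = 0`); the infinite
product is interpreted t-adically via its truncations. -/
theorem eta_series_identity :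
    ∀ N n : ℕ, n ≤ N →
      (PowerSeries.coeff (R := ℤ) n)
          (PowerSeries.mk fun k =>
            if Nat.sqrt k ^ 2 = k then chi12 (Nat.sqrt k) else 0) =
      (PowerSeries.coeff (R := ℤ) n)
          (PowerSeries.X *
            ∏ k ∈ Finset.range N, (1 - PowerSeries.X ^ (24 * (k + 1)))) := by
  intro N n hn
  change coeff n (mk chi12OfSqrt) = _
  rw [mk_chi12OfSqrt_eq_X_mul_expand_pentagonalSeries,
    prod_range_one_sub_X_pow_mul_eq_expand 24 (by norm_num)]
  rcases n with _ | j
  · simp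
  · rw [coeff_succ_X_mul, coeff_succ_X_mul, coeff_expand, coeff_expand]
    split_ifs
    · exact (coeff_prod_range_one_sub_X_pow_eq_coeff_pentagonalSeries
        ((Nat.div_le_self j 24).trans (by omega))).symm
    · rfl
end
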